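/- arXiv:1701.06148 — 2 statements merged into one kernel-verified Lean document; each statement's English description precedes it below -/
import Mathlib

section
/- In the strong coupling regime, i.e. for 0 < ν < 1 and β > (1 + 3ν)/6, every equilibrium of the two-node coupled system lies on the diagonal x₁ = x₂; hence the system has exactly three equilibria, the synchronized states (−√ν,−√ν), (√ν,√ν) and (1,1). -/
/-!
Subtracting the two equilibrium equations gives `(x₁ - x₂) Q = 0`, where
`Q = -(x₁² + x₁x₂ + x₂² - x₁ - x₂) + ν - 2β`. The quadratic form `x₁² + x₁x₂ + x₂² - x₁ - x₂`
attains its minimum `-1/3` at `x₁ = x₂ = 1/3`, so `Q ≤ 1/3 + ν - 2β < 0` in the strong coupling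
regime, forcing `x₁ = x₂`. On the diagonal the coupling vanishes and the equilibria are the
zeros `±√ν, 1` of `f`.
-/

/-- The single-node vector field `f(x,ν) = -(x-1)(x²-ν)`. -/
noncomputable def f (ν x : ℝ) : ℝ := -((x - 1) * (x ^ 2 - ν))

/-- `(x₁,x₂)` is an equilibrium of the two-node bidirectionally coupled system. -/
def IsEquilibrium (ν β x₁ x₂ : ℝ) : Prop :=
  f ν x₁ + β * (x₂ - x₁) = 0 ∧ f ν x₂ + β * (x₁ - x₂) = 0

lemma f_sub_f (ν x y : ℝ) :
    f ν x - f ν y = -(x - y) * (x ^ 2 + x * y + y ^ 2 - (x + y) - ν) := by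
  unfold f; ring

lemma neg_one_third_le_sq_add_mul_add_sq_sub_add (x y : ℝ) :
    -(1 / 3) ≤ x ^ 2 + x * y + y ^ 2 - (x + y) := by
  nlinarith [sq_nonneg (x + y - 2 / 3), sq_nonneg (x - y)]

lemma f_eq_zero_iff {ν : ℝ} (hν : 0 ≤ ν) (x : ℝ) :
    f ν x = 0 ↔ x = -Real.sqrt ν ∨ x = Real.sqrt ν ∨ x = 1 := by
  have hfactor : f ν x = -((x + Real.sqrt ν) * (x - Real.sqrt ν) * (x - 1)) := by
    unfold f; linear_combination (1 - x) * Real.sq_sqrt hν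
  simp only [hfactor, neg_eq_zero, mul_eq_zero, add_eq_zero_iff_eq_neg, sub_eq_zero, or_assoc]

namespace IsEquilibrium

variable {ν β x₁ x₂ : ℝ}

lemma eq_of_strong_coupling (hβ : (1 + 3 * ν) / 6 < β) (h : IsEquilibrium ν β x₁ x₂) :
    x₁ = x₂ := by
  obtain ⟨h₁, h₂⟩ := h
  have hfactor : (x₁ - x₂) * (x₁ ^ 2 + x₁ * x₂ + x₂ ^ 2 - (x₁ + x₂) - ν + 2 * β) = 0 := by
    linear_combination f_sub_f ν x₁ x₂ - h₁ + h₂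
  have hpos : 0 < x₁ ^ 2 + x₁ * x₂ + x₂ ^ 2 - (x₁ + x₂) - ν + 2 * β := by
    linarith [neg_one_third_le_sq_add_mul_add_sq_sub_add x₁ x₂]
  exact sub_eq_zero.mp ((mul_eq_zero.mp hfactor).resolve_right hpos.ne')

lemma diag_iff {x : ℝ} : IsEquilibrium ν β x x ↔ f ν x = 0 := by
  simp [IsEquilibrium]

end IsEquilibrium

theorem strong_coupling_synchronized_general {ν β : ℝ} (hν0 : 0 < ν)
    (hβ : (1 + 3 * ν) / 6 < β) :
    (∀ x₁ x₂ : ℝ, IsEquilibrium ν β x₁ x₂ → x₁ = x₂) ∧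
    {p : ℝ × ℝ | IsEquilibrium ν β p.1 p.2} =
      {(-Real.sqrt ν, -Real.sqrt ν), (Real.sqrt ν, Real.sqrt ν), (1, 1)} := by
  have hsync : ∀ x₁ x₂ : ℝ, IsEquilibrium ν β x₁ x₂ → x₁ = x₂ :=
    fun _ _ => IsEquilibrium.eq_of_strong_coupling hβ
  refine ⟨hsync, ?_⟩
  ext ⟨x₁, x₂⟩
  simp only [Set.mem_ofPred_eq, Set.mem_insert_iff, Set.mem_singleton_iff, Prod.mk.injEq]
  constructor
  · intro h
    obtain rfl := hsync x₁ x₂ h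
    simpa only [and_self] using (f_eq_zero_iff hν0.le x₁).mp (IsEquilibrium.diag_iff.mp h)
  · rintro (⟨rfl, rfl⟩ | ⟨rfl, rfl⟩ | ⟨rfl, rfl⟩) <;>
      exact IsEquilibrium.diag_iff.mpr ((f_eq_zero_iff hν0.le _).mpr (by simp))

/-- In the strong coupling regime `β > (1 + 3ν)/6` (with `0 < ν < 1`), every
equilibrium of the two-node coupled system is synchronized (`x₁ = x₂`), and the
system has exactly the three equilibria `(-√ν,-√ν)`, `(√ν,√ν)`, `(1,1)`. -/
theorem strong_coupling_synchronized {ν β : ℝ} (hν0 : 0 < ν) (hν1 : ν < 1)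
    (hβ : (1 + 3 * ν) / 6 < β) :
    (∀ x₁ x₂ : ℝ, IsEquilibrium ν β x₁ x₂ → x₁ = x₂) ∧
    {p : ℝ × ℝ | IsEquilibrium ν β p.1 p.2} =
      {(-Real.sqrt ν, -Real.sqrt ν), (Real.sqrt ν, Real.sqrt ν), (1, 1)} :=
  strong_coupling_synchronized_general hν0 hβ
end

section
/- For 0 < ν ≤ 1/10 and any β ≥ 0, the synchronized active state x_AA = (1,1) is the unique strict global minimizer of the coupled potential Ṽ on ℝ²: Ṽ(x₁,x₂) > Ṽ(1,1) for all (x₁,x₂) ≠ (1,1). -/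
/-- The single-node potential `V(x) = x⁴/4 - x³/3 + ν(x - x²/2)`. -/
noncomputable def V (ν x : ℝ) : ℝ := x ^ 4 / 4 - x ^ 3 / 3 + ν * (x - x ^ 2 / 2)

/-- The coupled two-node potential `Ṽ(x₁,x₂) = V(x₁) + V(x₂) + (β/2)(x₁-x₂)²`. -/
noncomputable def Vt (ν β x₁ x₂ : ℝ) : ℝ :=
  V ν x₁ + V ν x₂ + β / 2 * (x₁ - x₂) ^ 2

/-!
Since `V'(x) = (x - 1)(x² - ν)`, the difference `V x - V 1` has a double root at `1`, and the
cofactor `(x + 1/3)²/4 + (1/9 - ν)/2` is positive as soon as `ν < 1/9`. So `1` is the strict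
global minimizer of `V`, and `(1, 1)` is one of `Ṽ`, whose coupling term is nonnegative and
vanishes on the diagonal.
-/

lemma V_sub_V_one (ν x : ℝ) :
    V ν x - V ν 1 = (x - 1) ^ 2 * ((x + 1 / 3) ^ 2 / 4 + (1 / 9 - ν) / 2) := by
  unfold V
  ring

lemma V_one_le_V {ν : ℝ} (hν : ν ≤ 1 / 9) (x : ℝ) : V ν 1 ≤ V ν x := by
  have h := V_sub_V_one ν x
  have : 0 ≤ (x - 1) ^ 2 * ((x + 1 / 3) ^ 2 / 4 + (1 / 9 - ν) / 2) := by
    have : 0 ≤ 1 / 9 - ν := by linarith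
    positivity
  linarith

lemma V_one_lt_V {ν : ℝ} (hν : ν < 1 / 9) {x : ℝ} (hx : x ≠ 1) : V ν 1 < V ν x := by
  have h := V_sub_V_one ν x
  have : 0 < (x - 1) ^ 2 * ((x + 1 / 3) ^ 2 / 4 + (1 / 9 - ν) / 2) := by
    have : 0 < 1 / 9 - ν := by linarith
    have : x - 1 ≠ 0 := sub_ne_zero.mpr hx
    positivity
  linarith

lemma Vt_one_one (ν β : ℝ) : Vt ν β 1 1 = V ν 1 + V ν 1 := by
  simp [Vt]

theorem active_state_global_min_general {ν β : ℝ} (hν1 : ν ≤ 1 / 10)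
    (hβ : 0 ≤ β) :
    ∀ p : ℝ × ℝ, p ≠ (1, 1) → Vt ν β 1 1 < Vt ν β p.1 p.2 := by
  rintro ⟨x₁, x₂⟩ hp
  have hν : ν < 1 / 9 := by linarith
  have hcoupling : 0 ≤ β / 2 * (x₁ - x₂) ^ 2 := by positivity
  have hx : x₁ ≠ 1 ∨ x₂ ≠ 1 := by
    by_contra! h
    exact hp (Prod.ext h.1 h.2)
  rw [Vt_one_one, Vt]
  rcases hx with hx₁ | hx₂
  · linarith [V_one_lt_V hν hx₁, V_one_le_V hν.le x₂]
  · linarith [V_one_le_V hν.le x₁, V_one_lt_V hν hx₂]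

/-- For `0 < ν ≤ 1/10` and `β ≥ 0`, the synchronized active state `x_AA = (1,1)`
is the unique strict global minimizer of `Ṽ` on `ℝ²`. -/
theorem active_state_global_min {ν β : ℝ} (hν0 : 0 < ν) (hν1 : ν ≤ 1 / 10)
    (hβ : 0 ≤ β) :
    ∀ p : ℝ × ℝ, p ≠ (1, 1) → Vt ν β 1 1 < Vt ν β p.1 p.2 :=
  active_state_global_min_general hν1 hβ
end
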